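/- arXiv:1407.4793 — 9 statements merged into one kernel-verified Lean document; each statement's English description precedes it below -/
import Mathlib

section
/- Let (θ, w, x) be a Frobenius algebra in a simple strict C* tensor category (i.e., w ∈ Hom(id, θ), x ∈ Hom(θ, θ²) satisfy the unit property (w* × 1_θ)∘x = (1_θ × w*)∘x = 1_θ, associativity (x × 1_θ)∘x = (1_θ × x)∘x, and the Frobenius property (1_θ × x*)∘(x × 1_θ) = x∘x* = (x* × 1_θ)∘(1_θ × x)). Then the Frobenius algebra is special (i.e., x*∘x = λ·1_θ for some scalar λ) if and only if x*∘x∘w = λ·w is a scalar multiple of w. In particular, every Frobenius algebra with dim Hom(id, θ) = 1 is special. -/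
/-! The Frobenius relation and associativity give `x ∘ (x*x) = θ(x*x) ∘ x`. Composing with the
unit `θ(w*) ∘ x = 1_θ` then expresses `x*x` entirely through `w* ∘ (x*x)`, which is the adjoint
of `x*x ∘ w`; so if the latter is `λ w`, then `x*x = λ̄ · 1_θ`. When `Hom(id, θ) = ℂ w`, the
element `x*x ∘ w ∈ Hom(id, θ)` is automatically a multiple of `w`. -/

/-- `t ∈ Hom(σ, τ)` for endomorphisms `σ, τ` of `A`. -/
def IsIntertwiner {A : Type*} [Mul A] (σ τ : A → A) (t : A) : Prop :=
  ∀ n, t * σ n = τ n * t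

namespace IsIntertwiner

variable {A : Type*}

theorem comp [Semigroup A] {ρ σ τ : A → A} {s t : A}
    (hs : IsIntertwiner ρ σ s) (ht : IsIntertwiner σ τ t) : IsIntertwiner ρ τ (t * s) :=
  fun n => by rw [mul_assoc, hs, ← mul_assoc, ht, mul_assoc]

theorem star [Mul A] [StarMul A] {σ τ : A → A} {t : A}
    (hσ : ∀ n, σ (star n) = star (σ n)) (hτ : ∀ n, τ (star n) = star (τ n))
    (ht : IsIntertwiner σ τ t) : IsIntertwiner τ σ (Star.star t) := fun n => by
  simpa [star_mul, hσ, hτ] using (congrArg Star.star (ht (Star.star n))).symm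

end IsIntertwiner

theorem mul_mul_eq_map_mul_mul {A F : Type*} [Semigroup A] [FunLike F A A] [MulHomClass F A A]
    (θ : F) {x y : A} (hfrob : θ y * x = x * y) (hassoc : x * x = θ x * x) :
    x * (y * x) = θ (y * x) * x := by
  rw [← mul_assoc, ← hfrob, mul_assoc, hassoc, ← mul_assoc, map_mul]

theorem eq_smul_one_of_mul_eq_smul {R A F : Type*} [CommSemiring R] [Semiring A] [Algebra R A]
    [FunLike F A A] [AlgHomClass F R A A] (θ : F) {x r v : A} {μ : R}
    (hunit : θ v * x = 1) (hr : x * r = θ r * x) (hv : v * r = μ • v) : r = μ • 1 :=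
  calc r = θ v * x * r := by rw [hunit, one_mul]
    _ = θ (v * r) * x := by rw [mul_assoc, hr, ← mul_assoc, map_mul]
    _ = μ • 1 := by rw [hv, map_smul, smul_mul_assoc, hunit]

theorem frobenius_special_iff_on_unit_general
    {N : Type*} [NormedRing N] [StarRing N]
    [NormedAlgebra ℂ N] [StarModule ℂ N]
    (θ : N →⋆ₐ[ℂ] N)
    (w x : N)
    (hw : ∀ n : N, w * n = θ n * w)                 -- `w ∈ Hom(id, θ)`
    (hx : ∀ n : N, x * θ n = θ (θ n) * x)           -- `x ∈ Hom(θ, θ²)`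
    (hunit₂ : θ (star w) * x = 1)                    -- `(1_θ × w*) ∘ x = 1_θ`
    (hassoc : x * x = θ x * x)                       -- `(x × 1_θ) ∘ x = (1_θ × x) ∘ x`
    (hfrob₁ : θ (star x) * x = x * star x) :         -- Frobenius property
    ((∃ lam : ℂ, star x * x = lam • (1 : N)) ↔
        ∃ lam : ℂ, star x * x * w = lam • w) ∧
    ((∀ w' : N, (∀ n : N, w' * n = θ n * w') → ∃ c : ℂ, w' = c • w) →
        ∃ lam : ℂ, star x * x = lam • (1 : N)) := by
  have hw' : IsIntertwiner id θ w := hw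
  have hx' : IsIntertwiner θ (θ ∘ θ) x := hx
  have hr : IsIntertwiner θ θ (star x * x) :=
    hx'.comp (hx'.star (map_star θ) fun n => by simp [map_star])
  have special_of_unit : ∀ lam : ℂ, star x * x * w = lam • w →
      ∃ mu : ℂ, star x * x = mu • (1 : N) := fun lam h =>
    ⟨star lam, eq_smul_one_of_mul_eq_smul θ hunit₂ (mul_mul_eq_map_mul_mul θ hfrob₁ hassoc)
      (by simpa [star_mul, star_smul, mul_assoc] using congrArg star h)⟩
  refine ⟨⟨fun ⟨lam, h⟩ => ⟨lam, by rw [h, smul_mul_assoc, one_mul]⟩,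
    fun ⟨lam, h⟩ => special_of_unit lam h⟩, fun hdim => ?_⟩
  obtain ⟨c, hc⟩ := hdim _ (hw'.comp hr)
  exact special_of_unit c hc

/-- **Lemma 3.2** (Q-systems paper). A Frobenius algebra `(θ, w, x)` in a simple strict
C* tensor category — realized concretely inside `End₀(N)` for a C*-algebra `N`, where
morphisms are elements of `N` intertwining powers of the endomorphism `θ`, the monoidal
product of morphisms is `t₁ × t₂ = t₁ · α₁(t₂)` and concatenation is the operator
product — is *special* (`x*∘x` a scalar multiple of `1_θ`) if and only if
`x*∘x∘w` is a scalar multiple of `w`.  In particular, every Frobenius algebra with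
`dim Hom(id, θ) = 1` is special. -/
theorem frobenius_special_iff_on_unit
    {N : Type*} [NormedRing N] [StarRing N] [CStarRing N]
    [NormedAlgebra ℂ N] [StarModule ℂ N]
    (θ : N →⋆ₐ[ℂ] N)
    -- simplicity of the category: Hom(id, id) = ℂ·1
    (hsimple : ∀ c : N, (∀ n : N, c * n = n * c) → ∃ lam : ℂ, c = lam • (1 : N))
    (w x : N)
    (hw : ∀ n : N, w * n = θ n * w)                 -- `w ∈ Hom(id, θ)`
    (hx : ∀ n : N, x * θ n = θ (θ n) * x)           -- `x ∈ Hom(θ, θ²)`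
    (hunit₁ : star w * x = 1)                        -- `(w* × 1_θ) ∘ x = 1_θ`
    (hunit₂ : θ (star w) * x = 1)                    -- `(1_θ × w*) ∘ x = 1_θ`
    (hassoc : x * x = θ x * x)                       -- `(x × 1_θ) ∘ x = (1_θ × x) ∘ x`
    (hfrob₁ : θ (star x) * x = x * star x)           -- Frobenius property
    (hfrob₂ : x * star x = star x * θ x) :
    ((∃ lam : ℂ, star x * x = lam • (1 : N)) ↔
        ∃ lam : ℂ, star x * x * w = lam • w) ∧
    ((∀ w' : N, (∀ n : N, w' * n = θ n * w') → ∃ c : ℂ, w' = c • w) →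
        ∃ lam : ℂ, star x * x = lam • (1 : N)) :=
  frobenius_special_iff_on_unit_general θ w x hw hx hunit₂ hassoc hfrob₁
end

section
/- Let (θ, w, x) be a Frobenius algebra in a simple C* tensor category and set n := x*∘x ∈ Hom(θ, θ). Then n is a strictly positive element of Hom(θ, θ) (it satisfies n ≥ d⁻¹·1_θ, where w*∘w = d·1), and n satisfies (1_θ × n)∘x = x∘n = (n × 1_θ)∘x. -/
/-!
Since `w* w = d·1`, the element `d⁻¹ w w*` is a projection and hence lies below `1`. Conjugating
by `x` and using the unit property `w* x = 1` gives `d⁻¹·1 = x* (d⁻¹ w w*) x ≤ x* x`. The two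
intertwining identities come from reassociating products with the help of associativity
`x x = θ(x) x` and the two Frobenius identities.
-/

section StarProjection

variable {𝕜 A : Type*} [Field 𝕜] [StarRing 𝕜] [Ring A] [StarRing A] [Algebra 𝕜 A]
  [StarModule 𝕜 A]

theorem isStarProjection_inv_smul_mul_star {c : 𝕜} (hc : IsSelfAdjoint c) (hc0 : c ≠ 0) {w : A}
    (hw : star w * w = c • 1) : IsStarProjection (c⁻¹ • (w * star w)) where
  isIdempotentElem := by
    calc c⁻¹ • (w * star w) * c⁻¹ • (w * star w)
        = (c⁻¹ * c⁻¹) • (w * (star w * w) * star w) := by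
          simp only [smul_mul_smul, mul_assoc]
      _ = c⁻¹ • (w * star w) := by
          rw [hw, mul_smul_one, smul_mul_assoc, smul_smul, mul_assoc, inv_mul_cancel₀ hc0,
            mul_one]
  isSelfAdjoint := by
    rw [IsSelfAdjoint, star_smul, star_mul, star_star, star_inv₀, hc.star_eq]

theorem inv_smul_one_le_star_mul_self [PartialOrder A] [StarOrderedRing A] {c : 𝕜}
    (hc : IsSelfAdjoint c) (hc0 : c ≠ 0) {w x : A} (hw : star w * w = c • 1)
    (hwx : star w * x = 1) : c⁻¹ • (1 : A) ≤ star x * x := by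
  have hxw : star x * w = 1 := by simpa using congr_arg star hwx
  calc c⁻¹ • (1 : A) = star x * (c⁻¹ • (w * star w)) * x := by
        rw [mul_smul_comm, smul_mul_assoc, ← mul_assoc, hxw, one_mul, hwx]
    _ ≤ star x * 1 * x :=
        star_left_conjugate_le_conjugate (isStarProjection_inv_smul_mul_star hc hc0 hw).le_one x
    _ = star x * x := by rw [mul_one]

end StarProjection

section Reassociation

variable {M : Type*} [Semigroup M] {u x y z : M}

theorem mul_mul_mul_eq_of_mul_self_eq (hx : x * x = z * x) (hu : u * x = x * y) :
    u * z * x = x * (y * x) := by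
  rw [mul_assoc, ← hx, ← mul_assoc, hu, mul_assoc]

theorem mul_mul_eq_mul_mul_of_mul_self_eq (hx : x * x = z * x) (hy : x * y = y * z) :
    x * (y * x) = y * x * x := by
  rw [← mul_assoc, hy, mul_assoc, ← hx, mul_assoc]

end Reassociation

theorem frobenius_xx_strictly_positive_and_central_general
    {N : Type*} [NormedRing N] [StarRing N]
    [NormedAlgebra ℂ N] [StarModule ℂ N]
    [PartialOrder N] [StarOrderedRing N]
    (θ : N →⋆ₐ[ℂ] N)
    (w x : N)
    (hunit₁ : star w * x = 1)                        -- unit property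
    (hassoc : x * x = θ x * x)                       -- associativity
    (hfrob₁ : θ (star x) * x = x * star x)           -- Frobenius property
    (hfrob₂ : x * star x = star x * θ x)
    (d : ℝ) (hd : 0 < d)
    (hww : star w * w = (d : ℂ) • (1 : N)) :         -- `w*∘w = d·1`
    (((d⁻¹ : ℝ) : ℂ) • (1 : N) ≤ star x * x) ∧
    θ (star x * x) * x = x * (star x * x) ∧          -- `(1_θ × n)∘x = x∘n`
    x * (star x * x) = (star x * x) * x := by        -- `x∘n = (n × 1_θ)∘x`
  have hd_sa : IsSelfAdjoint (d : ℂ) := Complex.conj_ofReal d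
  have hd0 : (d : ℂ) ≠ 0 := Complex.ofReal_ne_zero.mpr hd.ne'
  refine ⟨?_, ?_, mul_mul_eq_mul_mul_of_mul_self_eq hassoc hfrob₂⟩
  · rw [Complex.ofReal_inv]
    exact inv_smul_one_le_star_mul_self hd_sa hd0 hww hunit₁
  · rw [map_mul]
    exact mul_mul_mul_eq_of_mul_self_eq hassoc hfrob₁

/-- **Lemma 3.4**. For a Frobenius algebra `(θ, w, x)` in a simple C* tensor category
(realized in `End₀(N)`), the element `n := x*∘x ∈ Hom(θ, θ)` is strictly positive —
indeed `n ≥ d⁻¹·1_θ` where `w*∘w = d·1` — and `n` lies in `Hom₀(θ,θ)`, i.e.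
`(1_θ × n)∘x = x∘n = (n × 1_θ)∘x`. -/
theorem frobenius_xx_strictly_positive_and_central
    {N : Type*} [NormedRing N] [StarRing N] [CStarRing N]
    [NormedAlgebra ℂ N] [StarModule ℂ N]
    [PartialOrder N] [StarOrderedRing N]
    (θ : N →⋆ₐ[ℂ] N)
    -- simplicity of the category: Hom(id, id) = ℂ·1
    (hsimple : ∀ c : N, (∀ n : N, c * n = n * c) → ∃ lam : ℂ, c = lam • (1 : N))
    (w x : N)
    (hw : ∀ n : N, w * n = θ n * w)                 -- `w ∈ Hom(id, θ)`
    (hx : ∀ n : N, x * θ n = θ (θ n) * x)           -- `x ∈ Hom(θ, θ²)`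
    (hunit₁ : star w * x = 1)                        -- unit property
    (hunit₂ : θ (star w) * x = 1)
    (hassoc : x * x = θ x * x)                       -- associativity
    (hfrob₁ : θ (star x) * x = x * star x)           -- Frobenius property
    (hfrob₂ : x * star x = star x * θ x)
    (d : ℝ) (hd : 0 < d)
    (hww : star w * w = (d : ℂ) • (1 : N)) :         -- `w*∘w = d·1`
    (((d⁻¹ : ℝ) : ℂ) • (1 : N) ≤ star x * x) ∧
    θ (star x * x) * x = x * (star x * x) ∧          -- `(1_θ × n)∘x = x∘n`
    x * (star x * x) = (star x * x) * x :=
  frobenius_xx_strictly_positive_and_central_general θ w x hunit₁ hassoc hfrob₁ hfrob₂ d hd hww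
end

section
/- Let (θ, w, x) be a Frobenius algebra in a simple C* tensor category, with n := x*∘x invertible and positive. Then the deformed triple (θ, ŵ, x̂) with ŵ := n^{1/2}∘w and x̂ := (n^{-1/2} × n^{-1/2})∘x∘n^{1/2} is again a Frobenius algebra, and it is special: x̂*∘x̂ = 1_θ. -/
/-!
Since `t = n^{-1/2}` lies in `Hom₀(θ,θ)`, we have `θ(t) x = x t` and `t x = x t`, so the deformed
comultiplication collapses to `x̂ = x t`. Each relation for `(ŵ, x̂)` then reduces to the
corresponding one for `(w, x)` by moving `s` and `t` past `x` and cancelling `s t = 1`, and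
`x̂* x̂ = t n t = t s s t = 1`.
-/

section StarInverse

variable {A : Type*} [Monoid A] [StarMul A] {x s t : A}

theorem star_eq_self_of_mul_eq_one (hs : star s = s) (hst : s * t = 1) : star t = t :=
  left_inv_eq_right_inv (by rw [← hs, ← star_mul, hst, star_one]) hst

theorem star_mul_self_eq_one_of_sq (hs_sq : s * s = star x * x) (hs : star s = s)
    (hst : s * t = 1) (hts : t * s = 1) : star (x * t) * (x * t) = 1 := calc
  star (x * t) * (x * t) = t * s * (s * t) := by
    rw [star_mul, star_eq_self_of_mul_eq_one hs hst, mul_assoc, ← mul_assoc (star x), ← hs_sq]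
    simp only [mul_assoc]
  _ = 1 := by rw [hts, hst, one_mul]

end StarInverse

section FrobeniusDeformation

variable {A F : Type*} [Monoid A] [FunLike F A A] (θ : F)

/-- Operator realization of a Frobenius algebra `(θ, w, x)`: `w : id → θ`, `x : θ → θ²`. -/
structure IsFrobeniusAlgebra [StarMul A] (w x : A) : Prop where
  unit_intertwines : ∀ n, w * n = θ n * w
  comul_intertwines : ∀ n, x * θ n = θ (θ n) * x
  unit_left : star w * x = 1
  unit_right : θ (star w) * x = 1
  assoc : x * x = θ x * x
  frobenius_left : θ (star x) * x = x * star x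
  frobenius_right : x * star x = star x * θ x

/-- `a ∈ Hom₀(θ,θ)`: `a ∈ Hom(θ,θ)` and `(1_θ × a)∘x = x∘a = (a × 1_θ)∘x`, where in the operator
realization `1_θ × a = θ a` and `a × 1_θ = a`. -/
structure MemHom₀ (x a : A) : Prop where
  commute_map : ∀ n, Commute a (θ n)
  map_mul_eq : θ a * x = x * a
  commute : Commute a x

variable {θ} {w x s t : A}

theorem MemHom₀.of_mul_eq_one [MonoidHomClass F A A] (hs : MemHom₀ θ x s) (hst : s * t = 1)
    (hts : t * s = 1) : MemHom₀ θ x t where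
  commute_map n := (hs.commute_map n).units_inv_left (u := ⟨s, t, hst, hts⟩)
  map_mul_eq := calc
    θ t * x = θ t * (x * s * t) := by rw [mul_assoc x, hst, mul_one]
    _ = θ (t * s) * x * t := by rw [← hs.map_mul_eq, map_mul]; simp only [mul_assoc]
    _ = x * t := by rw [hts, map_one, one_mul]
  commute := hs.commute.units_inv_left (u := ⟨s, t, hst, hts⟩)

theorem MemHom₀.mul_map_mul_mul_eq (ht : MemHom₀ θ x t) (hts : t * s = 1) :
    t * θ t * x * s = x * t := by
  rw [mul_assoc t, ht.map_mul_eq, ← mul_assoc, mul_assoc _ t, hts, mul_one, ht.commute.eq]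

theorem MemHom₀.star_mul_eq [StarMul A] [StarHomClass F A A] (ht : MemHom₀ θ x t)
    (ht_self : star t = t) : star x * θ t = t * star x := by
  simpa only [star_mul, ← map_star, ht_self] using congrArg star ht.map_mul_eq

theorem IsFrobeniusAlgebra.deform [StarMul A] [MonoidHomClass F A A] [StarHomClass F A A]
    (h : IsFrobeniusAlgebra θ w x) (hs : MemHom₀ θ x s) (hs_self : star s = s)
    (hst : s * t = 1) (hts : t * s = 1) : IsFrobeniusAlgebra θ (s * w) (x * t) := by
  have ht : MemHom₀ θ x t := hs.of_mul_eq_one hst hts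
  have ht_self : star t = t := star_eq_self_of_mul_eq_one hs_self hst
  have ht_star : Commute t (star x) := by simpa only [ht_self] using ht.commute.star_star
  have hstar : star (x * t) = t * star x := by rw [star_mul, ht_self]
  refine ⟨fun n ↦ ?_, fun n ↦ ?_, ?_, ?_, ?_, ?_, ?_⟩
  · rw [mul_assoc, h.unit_intertwines, ← mul_assoc, (hs.commute_map n).eq, mul_assoc]
  · rw [mul_assoc, (ht.commute_map n).eq, ← mul_assoc, h.comul_intertwines, mul_assoc]
  · calc star (s * w) * (x * t) = star w * (s * x) * t := by
          simp only [star_mul, hs_self, mul_assoc]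
      _ = star w * x * (s * t) := by simp only [hs.commute.eq, mul_assoc]
      _ = 1 := by rw [hst, mul_one, h.unit_left]
  · calc θ (star (s * w)) * (x * t) = θ (star w) * (θ s * x) * t := by
          simp only [star_mul, hs_self, map_mul, mul_assoc]
      _ = θ (star w) * x * (s * t) := by simp only [hs.map_mul_eq, mul_assoc]
      _ = 1 := by rw [hst, mul_one, h.unit_right]
  · calc x * t * (x * t) = x * x * t * t := by
          simp only [mul_assoc, ← mul_assoc t, ht.commute.eq]
      _ = θ x * (θ t * x) * t := by simp only [h.assoc, ht.map_mul_eq, mul_assoc]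
      _ = θ (x * t) * (x * t) := by simp only [map_mul, mul_assoc]
  · calc θ (star (x * t)) * (x * t) = θ t * (θ (star x) * x) * t := by
          simp only [hstar, map_mul, map_star, mul_assoc]
      _ = x * t * (star x * t) := by
          simp only [h.frobenius_left, ← mul_assoc, ht.map_mul_eq]
      _ = x * t * star (x * t) := by rw [hstar, ht_star.eq]
  · calc x * t * star (x * t) = x * t * (star x * θ t) := by
          rw [hstar, ht.star_mul_eq ht_self]
      _ = t * (star x * θ x) * θ t := by
          simp only [← h.frobenius_right, ← mul_assoc, ht.commute.eq]
      _ = star (x * t) * θ (x * t) := by simp only [hstar, map_mul, mul_assoc]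

end FrobeniusDeformation

theorem frobenius_deformation_is_special_general
    {N : Type*} [NormedRing N] [StarRing N]
    [NormedAlgebra ℂ N]
    [PartialOrder N] [StarOrderedRing N]
    (θ : N →⋆ₐ[ℂ] N)
    (w x : N)
    (hw : ∀ n : N, w * n = θ n * w)
    (hx : ∀ n : N, x * θ n = θ (θ n) * x)
    (hunit₁ : star w * x = 1)
    (hunit₂ : θ (star w) * x = 1)
    (hassoc : x * x = θ x * x)
    (hfrob₁ : θ (star x) * x = x * star x)
    (hfrob₂ : x * star x = star x * θ x)
    -- `s = n^{1/2}`, `t = n^{-1/2}`:  `n = x*∘x` is positive and invertible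
    (s t : N)
    (hs_pos : (0 : N) ≤ s)
    (hs_sq : s * s = star x * x)
    (hst : s * t = 1) (hts : t * s = 1)
    -- the powers `n^{±1/2}` lie in `Hom₀(θ, θ)`
    (hs_int : ∀ n : N, s * θ n = θ n * s)
    (hs_hom₁ : θ s * x = x * s) (hs_hom₂ : s * x = x * s) :
    (let wh : N := s * w
     let xh : N := t * θ t * x * s
     -- `(θ, ŵ, x̂)` is again a Frobenius algebra …
     (∀ n : N, wh * n = θ n * wh) ∧
     (∀ n : N, xh * θ n = θ (θ n) * xh) ∧
     star wh * xh = 1 ∧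
     θ (star wh) * xh = 1 ∧
     xh * xh = θ xh * xh ∧
     θ (star xh) * xh = xh * star xh ∧
     xh * star xh = star xh * θ xh ∧
     -- … and it is special:
     star xh * xh = 1) := by
  intro wh xh
  have hs : MemHom₀ θ x s := ⟨hs_int, hs_hom₁, hs_hom₂⟩
  have hs_self : star s = s := (IsSelfAdjoint.of_nonneg hs_pos).star_eq
  have hF := IsFrobeniusAlgebra.deform ⟨hw, hx, hunit₁, hunit₂, hassoc, hfrob₁, hfrob₂⟩
    hs hs_self hst hts
  have hxh : xh = x * t := (hs.of_mul_eq_one hst hts).mul_map_mul_mul_eq hts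
  rw [hxh]
  exact ⟨hF.unit_intertwines, hF.comul_intertwines, hF.unit_left, hF.unit_right, hF.assoc,
    hF.frobenius_left, hF.frobenius_right, star_mul_self_eq_one_of_sq hs_sq hs_self hst hts⟩

/-- **Corollary 3.5**. Let `(θ, w, x)` be a Frobenius algebra in a simple C* tensor
category with `n := x*∘x` invertible and positive.  With `s = n^{1/2}` and
`t = n^{-1/2}` (its functional-calculus powers, which lie in `Hom₀(θ,θ)`), the
deformed triple `(θ, ŵ = n^{1/2}∘w, x̂ = (n^{-1/2} × n^{-1/2})∘x∘n^{1/2})` is again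
a Frobenius algebra, and it is special: `x̂*∘x̂ = 1_θ`.
(Operator realization: `ŵ = s·w`, `x̂ = t·θ(t)·x·s`.) -/
theorem frobenius_deformation_is_special
    {N : Type*} [NormedRing N] [StarRing N] [CStarRing N]
    [NormedAlgebra ℂ N] [StarModule ℂ N]
    [PartialOrder N] [StarOrderedRing N]
    (θ : N →⋆ₐ[ℂ] N)
    (hsimple : ∀ c : N, (∀ n : N, c * n = n * c) → ∃ lam : ℂ, c = lam • (1 : N))
    (w x : N)
    (hw : ∀ n : N, w * n = θ n * w)
    (hx : ∀ n : N, x * θ n = θ (θ n) * x)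
    (hunit₁ : star w * x = 1)
    (hunit₂ : θ (star w) * x = 1)
    (hassoc : x * x = θ x * x)
    (hfrob₁ : θ (star x) * x = x * star x)
    (hfrob₂ : x * star x = star x * θ x)
    -- `s = n^{1/2}`, `t = n^{-1/2}`:  `n = x*∘x` is positive and invertible
    (s t : N)
    (hs_pos : (0 : N) ≤ s)
    (hs_sq : s * s = star x * x)
    (hst : s * t = 1) (hts : t * s = 1)
    -- the powers `n^{±1/2}` lie in `Hom₀(θ, θ)`
    (hs_int : ∀ n : N, s * θ n = θ n * s)
    (hs_hom₁ : θ s * x = x * s) (hs_hom₂ : s * x = x * s)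
    (ht_hom₁ : θ t * x = x * t) (ht_hom₂ : t * x = x * t) :
    (let wh : N := s * w
     let xh : N := t * θ t * x * s
     -- `(θ, ŵ, x̂)` is again a Frobenius algebra …
     (∀ n : N, wh * n = θ n * wh) ∧
     (∀ n : N, xh * θ n = θ (θ n) * xh) ∧
     star wh * xh = 1 ∧
     θ (star wh) * xh = 1 ∧
     xh * xh = θ xh * xh ∧
     θ (star xh) * xh = xh * star xh ∧
     xh * star xh = star xh * θ xh ∧
     -- … and it is special:
     star xh * xh = 1) :=
  frobenius_deformation_is_special_general θ w x hw hx hunit₁ hunit₂ hassoc hfrob₁ hfrob₂ s t hs_pos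
    hs_sq hst hts hs_int hs_hom₁ hs_hom₂
end

section
/- In a C* tensor category, the Frobenius property is a consequence of the unit property, associativity, and specialness. That is, if θ is an object, w : id → θ and x : θ → θ² satisfy (w* × 1_θ)∘x = (1_θ × w*)∘x = 1_θ, (x × 1_θ)∘x = (1_θ × x)∘x, and x*∘x = d·1_θ for some scalar d, then (1_θ × x*)∘(x × 1_θ) = x∘x* = (x* × 1_θ)∘(1_θ × x). -/
/-!
Put `A := θ(x*) x` (the left-hand side of the Frobenius relation). Associativity and specialness
give `A² = d A`, and then the C*-identity shows that `Y := (x - θ x) A` vanishes, because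
`Y* Y = A* (2d - A - A*) A = 0`. Applying the counit `w*` to `Y = 0` yields `A = x x*`; the other
relation is its adjoint.
-/

section Intertwiners

variable {R N : Type*} [CommSemiring R] [Ring N] [StarRing N] [Algebra R N]

theorem star_smul_eq_smul_of_star_mul_self_eq_smul_one [StarRing R] [StarModule R N] {x : N}
    {d : R} (hxx : star x * x = d • (1 : N)) (z : N) : star d • z = d • z := by
  have h : star d • (1 : N) = d • 1 :=
    calc star d • (1 : N) = star (star x * x) := by rw [hxx, star_smul, star_one]
      _ = d • 1 := by rw [star_mul, star_star, hxx]
  rw [← one_mul z, ← smul_mul_assoc, h, smul_mul_assoc]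

theorem star_mul_self_sub_mul_eq_zero [StarRing R] [StarModule R N] {u v a : N} {d : R}
    (hu : star u * u = d • 1) (hv : star v * v = d • 1) (ha : star v * u = a)
    (haa : a * a = d • a) : star ((u - v) * a) * ((u - v) * a) = 0 := by
  have hsa : star a * star a = d • star a := by
    rw [← star_mul, haa, star_smul, star_smul_eq_smul_of_star_mul_self_eq_smul_one hu]
  have hmid : (star u - star v) * (u - v) = d • 1 + d • 1 - star a - a := by
    rw [← ha, star_mul, star_star, mul_sub, sub_mul, sub_mul, hu, hv]
    abel
  calc star ((u - v) * a) * ((u - v) * a) = star a * ((star u - star v) * (u - v)) * a := by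
        rw [star_mul, star_sub]; simp only [mul_assoc]
    _ = d • (star a * a) + d • (star a * a) - star a * star a * a - star a * (a * a) := by
        rw [hmid]
        simp only [mul_add, mul_sub, add_mul, sub_mul, mul_smul_comm, smul_mul_assoc, mul_one,
          mul_assoc]
    _ = 0 := by rw [hsa, haa, smul_mul_assoc, mul_smul_comm]; abel

variable (θ : N →⋆ₐ[R] N) {x : N} {d : R}

theorem star_mul_map_eq_mul_star {w : N} (hw : ∀ n, w * n = θ n * w)
    (n : N) : star w * θ n = n * star w := by
  simpa [map_star] using (congrArg star (hw (star n))).symm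

theorem star_mul_sub_map_mul_map_mul {w : N} (hw : ∀ n, w * n = θ n * w)
    (hunit : star w * x = 1) (b : N) : star w * ((x - θ x) * (θ b * x)) = θ b * x - x * b :=
  calc star w * ((x - θ x) * (θ b * x)) = star w * x * (θ b * x) - star w * θ (x * b) * x := by
        simp only [map_mul, mul_sub, sub_mul, mul_assoc]
    _ = θ b * x - x * b := by
        rw [hunit, one_mul, star_mul_map_eq_mul_star θ hw, mul_assoc, hunit, mul_one]

theorem map_star_mul_mul_self (hx : ∀ n, x * θ n = θ (θ n) * x) (hassoc : x * x = θ x * x)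
    (hxx : star x * x = d • (1 : N)) :
    θ (star x) * x * (θ (star x) * x) = d • (θ (star x) * x) := by
  have hassoc' : star x * star x = star x * θ (star x) := by
    simpa [map_star] using congrArg star hassoc
  calc θ (star x) * x * (θ (star x) * x)
      = θ (star x * θ (star x)) * (θ x * x) := by
        rw [mul_assoc, ← mul_assoc x, hx, mul_assoc, hassoc, ← mul_assoc, ← map_mul]
    _ = θ (star x * star x * x) * x := by rw [← hassoc', ← mul_assoc, ← map_mul]
    _ = d • (θ (star x) * x) := by
        rw [mul_assoc, hxx, mul_smul_comm, mul_one, map_smul, smul_mul_assoc]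

end Intertwiners

theorem frobenius_property_from_specialness_general
    {N : Type*} [NormedRing N] [StarRing N] [CStarRing N]
    [NormedAlgebra ℂ N] [StarModule ℂ N]
    (θ : N →⋆ₐ[ℂ] N) (w x : N)
    (hw : ∀ n : N, w * n = θ n * w)                 -- `w ∈ Hom(id, θ)`
    (hx : ∀ n : N, x * θ n = θ (θ n) * x)           -- `x ∈ Hom(θ, θ²)`
    (hunit₁ : star w * x = 1)                        -- unit property
    (hassoc : x * x = θ x * x)                       -- associativity
    (d : ℂ) (hxx : star x * x = d • (1 : N)) :       -- specialness
    θ (star x) * x = x * star x ∧ x * star x = star x * θ x := by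
  have hθxx : star (θ x) * θ x = d • (1 : N) := by
    rw [← map_star, ← map_mul, hxx, map_smul, map_one]
  have hY : (x - θ x) * (θ (star x) * x) = 0 :=
    (CStarRing.star_mul_self_eq_zero_iff _).mp <| star_mul_self_sub_mul_eq_zero hxx hθxx
      (by rw [map_star]) (map_star_mul_mul_self θ hx hassoc hxx)
  have hfrob : θ (star x) * x = x * star x := by
    rw [← sub_eq_zero, ← star_mul_sub_map_mul_map_mul θ hw hunit₁, hY, mul_zero]
  refine ⟨hfrob, ?_⟩
  simpa [map_star] using congrArg star hfrob.symm

/-- **Lemma 3.8** (essentially [LRo]).  In a C* tensor category, the Frobenius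
property is a consequence of the unit property, associativity, and specialness:
if `w : id → θ` and `x : θ → θ²` satisfy `(w* × 1_θ)∘x = (1_θ × w*)∘x = 1_θ`,
`(x × 1_θ)∘x = (1_θ × x)∘x` and `x*∘x = d·1_θ`, then
`(1_θ × x*)∘(x × 1_θ) = x∘x* = (x* × 1_θ)∘(1_θ × x)`. -/
theorem frobenius_property_from_specialness
    {N : Type*} [NormedRing N] [StarRing N] [CStarRing N]
    [NormedAlgebra ℂ N] [StarModule ℂ N]
    (θ : N →⋆ₐ[ℂ] N) (w x : N)
    (hw : ∀ n : N, w * n = θ n * w)                 -- `w ∈ Hom(id, θ)`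
    (hx : ∀ n : N, x * θ n = θ (θ n) * x)           -- `x ∈ Hom(θ, θ²)`
    (hunit₁ : star w * x = 1)                        -- unit property
    (hunit₂ : θ (star w) * x = 1)
    (hassoc : x * x = θ x * x)                       -- associativity
    (d : ℂ) (hxx : star x * x = d • (1 : N)) :       -- specialness
    θ (star x) * x = x * star x ∧ x * star x = star x * θ x :=
  frobenius_property_from_specialness_general θ w x hw hx hunit₁ hassoc d hxx
end

section
/- Let A = (θ, w, x) be a Q-system (standard C* Frobenius algebra) and set r := x∘w ∈ Hom(id, θ). Then the pair (r, r̄ = r) solves the conjugacy relations for (θ, θ̄ = θ): (r* × 1_θ)∘(1_θ × r) = 1_θ and (1_θ × r*)∘(r × 1_θ) = 1_θ, and moreover r*∘r = dim(θ)·1, so (r, r) is a standard pair exhibiting θ as self-conjugate. -/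
/-!
With `r = x * w`, both conjugacy relations reduce to the unit property after one use of the
Frobenius property: for instance `r* θ(r) = w* (x* θ(x)) θ(w) = (w* x)(x* θ(w))`, and
`x* θ(w) = 1` is the adjoint of the unit property `θ(w*) x = 1`. Standardness of `r` is
`r* r = w* (x* x) w = d_A² · 1`.
-/

theorem mul_intertwines {M : Type*} [Monoid M] {f g : M → M} {w x : M} (hw : ∀ n, w * n = f n * w)
    (hx : ∀ n, x * f n = g n * x) (n : M) : x * w * n = g n * (x * w) := by
  rw [mul_assoc, hw n, ← mul_assoc, hx n, mul_assoc]

section Conjugacy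

variable {M F : Type*} [Monoid M] [StarMul M]

theorem star_mul_eq_one_comm {a b : M} (h : star a * b = 1) : star b * a = 1 := by
  simpa using congrArg star h

variable [FunLike F M M] [MulHomClass F M M] (θ : F) {w x : M}

theorem star_mul_map_eq_one (hunit : star w * x = 1) (hunit' : star x * θ w = 1)
    (hfrob : x * star x = star x * θ x) : star (x * w) * θ (x * w) = 1 :=
  calc star (x * w) * θ (x * w) = star w * (star x * θ x) * θ w := by
        simp only [star_mul, map_mul, mul_assoc]
    _ = (star w * x) * (star x * θ w) := by simp only [← hfrob, mul_assoc]
    _ = 1 := by rw [hunit, hunit', one_mul]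

theorem map_star_mul_eq_one (hunit : θ (star w) * x = 1) (hunit' : star x * w = 1)
    (hfrob : θ (star x) * x = x * star x) : θ (star (x * w)) * (x * w) = 1 :=
  calc θ (star (x * w)) * (x * w) = θ (star w) * (θ (star x) * x) * w := by
        simp only [star_mul, map_mul, mul_assoc]
    _ = (θ (star w) * x) * (star x * w) := by simp only [hfrob, mul_assoc]
    _ = 1 := by rw [hunit, hunit', one_mul]

end Conjugacy

theorem star_mul_mul_self_eq_smul_one {R A : Type*} [CommSemiring R] [Semiring A] [StarMul A]
    [Algebra R A] {w x : A} {a b : R} (hx : star x * x = a • 1) (hw : star w * w = b • 1) :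
    star (x * w) * (x * w) = (a * b) • 1 := by
  rw [star_mul, mul_assoc, ← mul_assoc (star x), hx, smul_mul_assoc, one_mul, mul_smul_comm, hw,
    smul_smul]

theorem qsystem_r_is_standard_pair_general
    {N : Type*} [NormedRing N] [StarRing N]
    [NormedAlgebra ℂ N]
    (θ : N →⋆ₐ[ℂ] N) (w x : N)
    (dA : ℝ)
    (hw : ∀ n : N, w * n = θ n * w)
    (hx : ∀ n : N, x * θ n = θ (θ n) * x)
    (hunit₁ : star w * x = 1)
    (hunit₂ : θ (star w) * x = 1)
    (hfrob₁ : θ (star x) * x = x * star x)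
    (hfrob₂ : x * star x = star x * θ x)
    (hww : star w * w = (dA : ℂ) • (1 : N))          -- standardness
    (hxx : star x * x = (dA : ℂ) • (1 : N)) :
    (∀ n : N, (x * w) * n = θ (θ n) * (x * w)) ∧     -- `r ∈ Hom(id, θ²)`
    star (x * w) * θ (x * w) = 1 ∧                   -- `(r* × 1_θ)∘(1_θ × r) = 1_θ`
    θ (star (x * w)) * (x * w) = 1 ∧                 -- `(1_θ × r*)∘(r × 1_θ) = 1_θ`
    star (x * w) * (x * w) = ((dA ^ 2 : ℝ) : ℂ) • (1 : N) := by  -- `r*∘r = dim(θ)·1`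
  have hunit₂' : star x * θ w = 1 := star_mul_eq_one_comm (by rwa [← map_star])
  refine ⟨mul_intertwines hw hx, star_mul_map_eq_one θ hunit₁ hunit₂' hfrob₂,
    map_star_mul_eq_one θ hunit₂ (star_mul_eq_one_comm hunit₁) hfrob₁, ?_⟩
  rw [star_mul_mul_self_eq_smul_one hxx hww]
  push_cast
  ring_nf

/-- **Corollary 3.10**.  For a Q-system `A = (θ, w, x)` (a standard C* Frobenius
algebra, `w*∘w = d_A·1`, `x*∘x = d_A·1_θ`, `d_A = √dim(θ)`), the element
`r := x∘w ∈ Hom(id, θ²)` together with `r̄ = r` solves the conjugacy relations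
`(r* × 1_θ)∘(1_θ × r) = 1_θ` and `(1_θ × r*)∘(r × 1_θ) = 1_θ`, and moreover
`r*∘r = dim(θ)·1`; hence `(r, r)` is a standard pair exhibiting `θ` as
self-conjugate. -/
theorem qsystem_r_is_standard_pair
    {N : Type*} [NormedRing N] [StarRing N] [CStarRing N]
    [NormedAlgebra ℂ N] [StarModule ℂ N]
    (θ : N →⋆ₐ[ℂ] N) (w x : N)
    (dA : ℝ) (hdA : 0 < dA)
    (hw : ∀ n : N, w * n = θ n * w)
    (hx : ∀ n : N, x * θ n = θ (θ n) * x)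
    (hunit₁ : star w * x = 1)
    (hunit₂ : θ (star w) * x = 1)
    (hassoc : x * x = θ x * x)
    (hfrob₁ : θ (star x) * x = x * star x)
    (hfrob₂ : x * star x = star x * θ x)
    (hww : star w * w = (dA : ℂ) • (1 : N))          -- standardness
    (hxx : star x * x = (dA : ℂ) • (1 : N)) :
    (∀ n : N, (x * w) * n = θ (θ n) * (x * w)) ∧     -- `r ∈ Hom(id, θ²)`
    star (x * w) * θ (x * w) = 1 ∧                   -- `(r* × 1_θ)∘(1_θ × r) = 1_θ`
    θ (star (x * w)) * (x * w) = 1 ∧                 -- `(1_θ × r*)∘(r × 1_θ) = 1_θ`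
    star (x * w) * (x * w) = ((dA ^ 2 : ℝ) : ℂ) • (1 : N) :=
  qsystem_r_is_standard_pair_general θ w x dA hw hx hunit₁ hunit₂ hfrob₁ hfrob₂ hww hxx
end

section
/- Let (θ, w, x) be a Frobenius algebra. The linear maps q ↦ θ(q)∘x (from Hom(θ, id) to Hom(θ, θ)) and t ↦ w*∘t (from Hom(θ, θ) to Hom(θ, id)) are mutually inverse bijections between Hom(θ, id) and the subspace of elements t ∈ Hom(θ, θ) satisfying (1_θ × t)∘x = x∘t. Moreover, under this bijection, q satisfies (q × 1_θ)∘x = (1_θ × q)∘x if and only if the corresponding t additionally satisfies (t × 1_θ)∘x = x∘t, i.e., t ∈ Hom₀(θ, θ). -/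
/-!
Since `w ∈ Hom(id, θ)`, its adjoint `w*` lies in `Hom(θ, id)`, and the unit law `w*x = 1` then makes
`t ↦ w*t` a left inverse of `q ↦ θ(q)x` on all of the algebra; the other unit law `θ(w*)x = 1` makes
it a right inverse on the elements `t` with `θ(t)x = xt`. Associativity `xx = θ(x)x` rewrites both
`(t × 1)∘x = θ(q)xx` and `(1 × t)∘x = xθ(q)x` as images under `m ↦ θ(m)x`, of `qx` and `θ(q)x`
respectively, so the last equivalence is the injectivity of that map.
-/

/-- `t ∈ Hom(f, g)` in the algebra picture: `t f(n) = g(n) t` for all `n`. -/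
def Intertwines {A : Type*} [Mul A] (f g : A → A) (t : A) : Prop :=
  ∀ n, t * f n = g n * t

namespace Intertwines

variable {A : Type*} [Monoid A] {f g h : A → A} {s t : A}

theorem mul (ht : Intertwines g h t) (hs : Intertwines f g s) : Intertwines f h (t * s) :=
  fun n => by rw [mul_assoc, hs n, ← mul_assoc, ht n, mul_assoc]

theorem map {F : Type*} [FunLike F A A] [MulHomClass F A A] (θ : F) (ht : Intertwines f g t) :
    Intertwines (θ ∘ f) (θ ∘ g) (θ t) :=
  fun n => by simp only [Function.comp_apply, ← map_mul, ht n]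

theorem star [StarMul A] (hf : ∀ n, f (star n) = star (f n)) (hg : ∀ n, g (star n) = star (g n))
    (ht : Intertwines f g t) : Intertwines g f (star t) := fun n => by
  simpa only [star_mul, hf, hg, star_star] using (congrArg Star.star (ht (Star.star n))).symm

end Intertwines

section Frobenius

variable {A F : Type*} [Monoid A] [FunLike F A A] {θ : F} {v x : A}

theorem leftInverse_mul_map_mul (hv : Intertwines θ id v) (hunit : v * x = 1) :
    Function.LeftInverse (fun t => v * t) (fun q => θ q * x) := fun q => by
  dsimp only
  rw [← mul_assoc, hv q, id, mul_assoc, hunit, mul_one]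

theorem map_mul_mul_of_map_mul_eq [MulHomClass F A A] (hunit : θ v * x = 1) {t : A}
    (ht : θ t * x = x * t) : θ (v * t) * x = t := by
  rw [map_mul, mul_assoc, ht, ← mul_assoc, hunit, one_mul]

theorem map_mul_mul_of_assoc [MulHomClass F A A] (hassoc : x * x = θ x * x) (m : A) :
    θ (m * x) * x = θ m * x * x := by
  rw [map_mul, mul_assoc, ← hassoc, mul_assoc]

theorem map_map_mul_mul_of_assoc [MulHomClass F A A] (hx : Intertwines θ (θ ∘ θ) x)
    (hassoc : x * x = θ x * x) (q : A) : θ (θ q * x) * x = x * (θ q * x) := by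
  rw [map_mul_mul_of_assoc hassoc, ← mul_assoc, hx q]
  rfl

end Frobenius

theorem frobenius_hom_id_bijection_general
    {N : Type*} [NormedRing N] [StarRing N]
    [NormedAlgebra ℂ N]
    (θ : N →⋆ₐ[ℂ] N) (w x : N)
    (hw : ∀ n : N, w * n = θ n * w)
    (hx : ∀ n : N, x * θ n = θ (θ n) * x)
    (hunit₁ : star w * x = 1) (hunit₂ : θ (star w) * x = 1)
    (hassoc : x * x = θ x * x) :
    -- `q ↦ t := θ(q)∘x` lands in the subspace and is inverted by `t ↦ w*∘t`
    (∀ q : N, (∀ n : N, q * θ n = n * q) →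
        ((∀ n : N, (θ q * x) * θ n = θ n * (θ q * x)) ∧
         θ (θ q * x) * x = x * (θ q * x) ∧
         star w * (θ q * x) = q)) ∧
    -- `t ↦ q := w*∘t` lands in `Hom(θ, id)` and is inverted by `q ↦ θ(q)∘x`
    (∀ t : N, (∀ n : N, t * θ n = θ n * t) → θ t * x = x * t →
        ((∀ n : N, (star w * t) * θ n = n * (star w * t)) ∧
         θ (star w * t) * x = t)) ∧
    -- correspondence between `(q × 1_θ)∘x = (1_θ × q)∘x` and `t ∈ Hom₀(θ,θ)`
    (∀ q : N, (∀ n : N, q * θ n = n * q) →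
        (q * x = θ q * x ↔ (θ q * x) * x = x * (θ q * x))) := by
  have hw_star : Intertwines θ id (star w) :=
    Intertwines.star (g := θ) (fun _ => rfl) (map_star θ) hw
  have hinv := leftInverse_mul_map_mul hw_star hunit₁
  have hx' : Intertwines θ (θ ∘ θ) x := hx
  refine ⟨fun q hq => ⟨?_, map_map_mul_mul_of_assoc hx' hassoc q, hinv q⟩,
    fun t ht ht' => ⟨hw_star.mul ht, map_mul_mul_of_map_mul_eq hunit₂ ht'⟩, fun q _ => ?_⟩
  · exact (Intertwines.map θ hq).mul hx'
  · rw [← map_mul_mul_of_assoc hassoc, ← map_map_mul_mul_of_assoc hx' hassoc]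
    exact hinv.injective.eq_iff.symm

/-- **Lemma 3.21**.  For a Frobenius algebra `(θ, w, x)`, the linear maps
`q ↦ θ(q)∘x` and `t ↦ w*∘t` are mutually inverse bijections between
`Hom(θ, id)` and the subspace of `t ∈ Hom(θ, θ)` with `(1_θ × t)∘x = x∘t`.
Moreover `q` satisfies `(q × 1_θ)∘x = (1_θ × q)∘x` iff the corresponding `t`
additionally satisfies `(t × 1_θ)∘x = x∘t`, i.e. `t ∈ Hom₀(θ, θ)`. -/
theorem frobenius_hom_id_bijection
    {N : Type*} [NormedRing N] [StarRing N] [CStarRing N]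
    [NormedAlgebra ℂ N] [StarModule ℂ N]
    (θ : N →⋆ₐ[ℂ] N) (w x : N)
    (hw : ∀ n : N, w * n = θ n * w)
    (hx : ∀ n : N, x * θ n = θ (θ n) * x)
    (hunit₁ : star w * x = 1) (hunit₂ : θ (star w) * x = 1)
    (hassoc : x * x = θ x * x)
    (hfrob₁ : θ (star x) * x = x * star x) (hfrob₂ : x * star x = star x * θ x) :
    -- `q ↦ t := θ(q)∘x` lands in the subspace and is inverted by `t ↦ w*∘t`
    (∀ q : N, (∀ n : N, q * θ n = n * q) →
        ((∀ n : N, (θ q * x) * θ n = θ n * (θ q * x)) ∧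
         θ (θ q * x) * x = x * (θ q * x) ∧
         star w * (θ q * x) = q)) ∧
    -- `t ↦ q := w*∘t` lands in `Hom(θ, id)` and is inverted by `q ↦ θ(q)∘x`
    (∀ t : N, (∀ n : N, t * θ n = θ n * t) → θ t * x = x * t →
        ((∀ n : N, (star w * t) * θ n = n * (star w * t)) ∧
         θ (star w * t) * x = t)) ∧
    -- correspondence between `(q × 1_θ)∘x = (1_θ × q)∘x` and `t ∈ Hom₀(θ,θ)`
    (∀ q : N, (∀ n : N, q * θ n = n * q) →
        (q * x = θ q * x ↔ (θ q * x) * x = x * (θ q * x))) :=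
  frobenius_hom_id_bijection_general θ w x hw hx hunit₁ hunit₂ hassoc
end

section
/- Every left module (β, m) of a Q-system A = (θ, w, x) is equivalent to a standard module: the element n := (m*∘m)^{1/2} ∈ Hom(β, β) is invertible and positive (indeed m*∘m ≥ d_A^{-1}·1_β), and the equivalent module (β, (1_θ × n)∘m∘n^{-1}) satisfies m'*∘m' = d_A·1_β. -/
/-!
`w w*` is `d_A` times a projection, so `w w* ≤ d_A`, and conjugating by `m` gives
`1 = m* w w* m ≤ d_A m* m`; a C*-algebra element above a positive scalar is invertible, hence so
is its square root `n`. The representation property `θ(m) m = x m` together with `x* x = d_A`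
yields `m* θ(m* m) m = d_A m* m`, and conjugating this identity by `n⁻¹ = n'` normalizes `m`.
-/

open scoped ComplexOrder

section StarAlgebra

variable {A : Type*} [Ring A] [StarRing A] [Algebra ℂ A]

lemma star_mul_map_star_mul_self_mul (θ : A →⋆ₐ[ℂ] A) {x m : A} {c : ℂ}
    (hxx : star x * x = c • (1 : A)) (hmrep : θ m * m = x * m) :
    star m * θ (star m * m) * m = c • (star m * m) := by
  have hmrep' : star m * θ (star m) = star m * star x := by
    simpa only [star_mul, ← map_star] using congrArg star hmrep
  calc star m * θ (star m * m) * m = (star m * θ (star m)) * (θ m * m) := by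
        simp only [map_mul, mul_assoc]
    _ = star m * (star x * x) * m := by rw [hmrep', hmrep]; simp only [mul_assoc]
    _ = c • (star m * m) := by rw [hxx, mul_smul_comm, smul_mul_assoc, mul_one]

lemma star_mul_self_map_mul_mul_eq_smul_one (θ : A →⋆ₐ[ℂ] A) {m n n' : A} {c : ℂ}
    (hn : IsSelfAdjoint n) (hnn' : n * n' = 1) (hn_sq : n * n = star m * m)
    (hm : star m * θ (star m * m) * m = c • (star m * m)) :
    star (θ n * m * n') * (θ n * m * n') = c • (1 : A) := by
  have hn'n : star n' * n = 1 := by simpa [hn.star_eq] using congrArg star hnn'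
  calc star (θ n * m * n') * (θ n * m * n')
      = star n' * (star m * θ (star n * n) * m) * n' := by
        simp only [star_mul, ← map_star, map_mul, mul_assoc]
    _ = c • ((star n' * n) * (n * n')) := by
        rw [hn.star_eq, hn_sq, hm, ← hn_sq, mul_smul_comm, smul_mul_assoc]
        simp only [mul_assoc]
    _ = c • (1 : A) := by rw [hn'n, hnn', one_mul]

variable [StarModule ℂ A]

lemma isStarProjection_smul_mul_star {v : A} {c : ℝ} (hc : c ≠ 0)
    (hv : star v * v = (c : ℂ) • (1 : A)) :
    IsStarProjection (((c⁻¹ : ℝ) : ℂ) • (v * star v)) where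
  isIdempotentElem := by
    have hc' : ((c⁻¹ : ℝ) : ℂ) * c = 1 := by
      rw [← Complex.ofReal_mul, inv_mul_cancel₀ hc, Complex.ofReal_one]
    rw [IsIdempotentElem, smul_mul_smul_comm, mul_assoc, ← mul_assoc (star v), hv,
      smul_mul_assoc, one_mul, mul_smul_comm, smul_smul, mul_assoc, hc', mul_one]
  isSelfAdjoint := by
    rw [IsSelfAdjoint, star_smul, star_mul, star_star, Complex.star_def, Complex.conj_ofReal]

variable [PartialOrder A] [StarOrderedRing A]

lemma mul_star_le_smul_one {v : A} {c : ℝ} (hc : 0 < c)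
    (hv : star v * v = (c : ℂ) • (1 : A)) :
    v * star v ≤ (c : ℂ) • (1 : A) := by
  have h := smul_le_smul_of_nonneg_left (isStarProjection_smul_mul_star hc.ne' hv).le_one
    (show (0 : ℂ) ≤ c by exact_mod_cast hc.le)
  rwa [smul_smul, ← Complex.ofReal_mul, mul_inv_cancel₀ hc.ne', Complex.ofReal_one,
    one_smul] at h

lemma inv_smul_one_le_star_mul_self_s8 {v m : A} {c : ℝ} (hc : 0 < c)
    (hv : star v * v = (c : ℂ) • (1 : A)) (hvm : star v * m = 1) :
    ((c⁻¹ : ℝ) : ℂ) • (1 : A) ≤ star m * m := by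
  have hone : (1 : A) ≤ (c : ℂ) • (star m * m) := by
    have hmv : star m * v = 1 := by simpa using congrArg star hvm
    calc (1 : A) = star m * (v * star v) * m := by
          rw [← mul_assoc, hmv, one_mul, hvm]
      _ ≤ star m * ((c : ℂ) • (1 : A)) * m :=
          star_left_conjugate_le_conjugate (mul_star_le_smul_one hc hv) m
      _ = (c : ℂ) • (star m * m) := by rw [mul_smul_comm, smul_mul_assoc, mul_one]
  have h := smul_le_smul_of_nonneg_left hone
    (show (0 : ℂ) ≤ ((c⁻¹ : ℝ) : ℂ) by exact_mod_cast (inv_pos.mpr hc).le)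
  rwa [smul_smul, ← Complex.ofReal_mul, inv_mul_cancel₀ hc.ne', Complex.ofReal_one,
    one_smul] at h

end StarAlgebra

lemma CStarAlgebra.isUnit_of_mul_self_eq_of_smul_one_le {A : Type*} [CStarAlgebra A]
    [PartialOrder A] [StarOrderedRing A] {a n : A} {r : ℝ} (hr : 0 < r)
    (ha : (r : ℂ) • (1 : A) ≤ a) (hn : n * n = a) : IsUnit n := by
  have hpos : IsStrictlyPositive ((r : ℂ) • (1 : A)) :=
    .smul (show (0 : ℂ) < r by exact_mod_cast hr) isStrictlyPositive_one
  exact isUnit_mul_self_iff.mp (hn ▸ CStarAlgebra.isUnit_of_le _ ha hpos)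

theorem module_equivalent_to_standard_general
    {N : Type*} [NormedRing N] [StarRing N] [CStarRing N]
    [NormedAlgebra ℂ N] [StarModule ℂ N] [CompleteSpace N]
    [PartialOrder N] [StarOrderedRing N]
    (θ : N →⋆ₐ[ℂ] N) (w x : N)
    (dA : ℝ) (hdA : 0 < dA)
    (hww : star w * w = (dA : ℂ) • (1 : N))
    (hxx : star x * x = (dA : ℂ) • (1 : N))
    -- the (not necessarily standard) module `(β, m)`
    (m : N)
    (hmunit : star w * m = 1)
    (hmrep : θ m * m = x * m)
    -- `n := (m*∘m)^{1/2}`: the positive square root of `m*∘m`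
    (n : N) (hn_pos : (0 : N) ≤ n) (hn_sq : n * n = star m * m) :
    (((dA⁻¹ : ℝ) : ℂ) • (1 : N) ≤ star m * m) ∧
    IsUnit n ∧
    (∀ n' : N, n * n' = 1 → n' * n = 1 →
        star (θ n * m * n') * (θ n * m * n') = (dA : ℂ) • (1 : N)) := by
  let _ : CStarAlgebra N := ⟨⟩
  have hlower := inv_smul_one_le_star_mul_self_s8 hdA hww hmunit
  refine ⟨hlower,
    CStarAlgebra.isUnit_of_mul_self_eq_of_smul_one_le (inv_pos.mpr hdA) hlower hn_sq,
    fun n' hnn' _ => ?_⟩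
  exact star_mul_self_map_mul_mul_eq_smul_one θ (.of_nonneg hn_pos) hnn' hn_sq
    (star_mul_map_star_mul_self_mul θ hxx hmrep)

/-- **Lemma 3.24 (ii)**.  Every left module `(β, m)` of a Q-system `A = (θ, w, x)`
is equivalent to a standard module: `m*∘m ≥ d_A⁻¹·1_β`, the positive square root
`n` of `m*∘m` is invertible, and the equivalent module
`(β, m' = (1_θ × n)∘m∘n⁻¹)` satisfies `m'*∘m' = d_A·1_β`. -/
theorem module_equivalent_to_standard
    {N : Type*} [NormedRing N] [StarRing N] [CStarRing N]
    [NormedAlgebra ℂ N] [StarModule ℂ N] [CompleteSpace N]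
    [PartialOrder N] [StarOrderedRing N]
    (θ : N →⋆ₐ[ℂ] N) (w x : N)
    (dA : ℝ) (hdA : 0 < dA)
    (hw : ∀ n : N, w * n = θ n * w)
    (hx : ∀ n : N, x * θ n = θ (θ n) * x)
    (hunit₁ : star w * x = 1) (hunit₂ : θ (star w) * x = 1)
    (hassoc : x * x = θ x * x)
    (hfrob₁ : θ (star x) * x = x * star x) (hfrob₂ : x * star x = star x * θ x)
    (hww : star w * w = (dA : ℂ) • (1 : N))
    (hxx : star x * x = (dA : ℂ) • (1 : N))
    -- the (not necessarily standard) module `(β, m)`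
    (β : N →⋆ₐ[ℂ] N) (m : N)
    (hm : ∀ n : N, m * β n = θ (β n) * m)
    (hmunit : star w * m = 1)
    (hmrep : θ m * m = x * m)
    -- `n := (m*∘m)^{1/2}`: the positive square root of `m*∘m`
    (n : N) (hn_pos : (0 : N) ≤ n) (hn_sq : n * n = star m * m) :
    (((dA⁻¹ : ℝ) : ℂ) • (1 : N) ≤ star m * m) ∧
    IsUnit n ∧
    (∀ n' : N, n * n' = 1 → n' * n = 1 →
        star (θ n * m * n') * (θ n * m * n') = (dA : ℂ) • (1 : N)) :=
  module_equivalent_to_standard_general θ w x dA hdA hww hxx m hmunit hmrep n hn_pos hn_sq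
end

section
/- Let (β, m) be a standard module of a Q-system A = (θ, w, x). Then the 'Frobenius-type' relation (x* × 1_β)∘(1_θ × m) = m∘m* = (1_θ × m*)∘(x × 1_β) holds. Consequently, m* = (r* × 1_β)∘(1_θ × m) with r = x∘w, and E := d_A^{-1}·(x* × 1_β)∘(1_θ × m) is a projection (self-adjoint idempotent) in Hom(θβ, θβ). -/
/-!
Write `P = x* θ(m)` and `d = d_A`. Standardness of `m` and the Frobenius property of `x` give
`P* P = d P*`, so `E = d⁻¹ P` is a projection, and `F = d⁻¹ m m*` is a projection below it
(`E F = F`). The positive map `δ'(T) = x* θ(T) x` is faithful: by the C*-identity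
`δ'(T* T) = 0` forces `θ(T) x = 0`, hence `T = T w* x = w* θ(T) x = 0`. Again by the Frobenius
property `δ'(P) = d P = P P* = δ'(m m*)`, so the projection `E - F` is killed by `δ'`: `E = F`.
-/

section ScaledProjection

variable {𝕜 R : Type*} [Field 𝕜] [StarRing 𝕜] [Ring R] [StarRing R] [Algebra 𝕜 R]
  [StarModule 𝕜 R] {c : 𝕜} {p : R}

theorem isSelfAdjoint_of_star_mul_self_eq_smul_star (hc : IsSelfAdjoint c) (hc0 : c ≠ 0)
    (h : star p * p = c • star p) : IsSelfAdjoint p := by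
  have hstar : star p * p = c • p := by
    simpa [star_mul, star_smul, hc.star_eq] using congr(star $h)
  exact smul_right_injective R hc0 (h.symm.trans hstar)

theorem isStarProjection_inv_smul_of_star_mul_self_eq_smul_star (hc : IsSelfAdjoint c)
    (hc0 : c ≠ 0) (h : star p * p = c • star p) : IsStarProjection (c⁻¹ • p) := by
  have hp := isSelfAdjoint_of_star_mul_self_eq_smul_star hc hc0 h
  have hpp : p * p = c • p := by rwa [hp.star_eq] at h
  refine ⟨?_, hc.inv₀.smul hp⟩
  rw [IsIdempotentElem, smul_mul_smul_comm, hpp, smul_smul, inv_mul_cancel_right₀ hc0]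

end ScaledProjection

section QSystem

variable {𝕜 N : Type*} [CommSemiring 𝕜] [Ring N] [StarRing N] [Algebra 𝕜 N]
  (θ : N →⋆ₐ[𝕜] N) {x m : N} {c : 𝕜}

theorem star_mul_star_mul_map_eq_smul (hmrep : θ m * m = x * m) (hmstd : star m * m = c • 1) :
    star m * (star x * θ m) = c • star m := by
  have hmrep' : star m * θ (star m) = star m * star x := by
    simpa [star_mul, map_star] using congr(star $hmrep)
  rw [← mul_assoc, ← hmrep', mul_assoc, ← map_mul, hmstd, map_smul, map_one, mul_smul_comm,
    mul_one]

theorem star_mul_self_star_mul_map_eq_smul_star (hx : ∀ n : N, x * θ n = θ (θ n) * x)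
    (hfrob₁ : θ (star x) * x = x * star x) (hmrep : θ m * m = x * m)
    (hmstd : star m * m = c • 1) :
    star (star x * θ m) * (star x * θ m) = c • star (star x * θ m) := by
  calc star (star x * θ m) * (star x * θ m)
      = θ (star m) * (x * star x) * θ m := by
        simp only [star_mul, star_star, map_star, mul_assoc]
    _ = θ (star m * star x) * (x * θ m) := by rw [← hfrob₁, map_mul]; noncomm_ring
    _ = θ (star m * (star x * θ m)) * x := by rw [hx]; simp only [map_mul, mul_assoc]
    _ = c • star (star x * θ m) := by
      rw [star_mul_star_mul_map_eq_smul θ hmrep hmstd, map_smul, smul_mul_assoc, star_mul,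
        star_star, map_star]

theorem star_mul_map_mul_mul_star_eq_smul (hxx : star x * x = c • 1) (hmrep : θ m * m = x * m) :
    star x * θ m * (m * star m) = c • (m * star m) := by
  rw [← mul_assoc, mul_assoc (star x), hmrep, ← mul_assoc, hxx, smul_mul_assoc, one_mul,
    smul_mul_assoc]

theorem star_mul_map_star_mul_map_mul_eq_smul (hx : ∀ n : N, x * θ n = θ (θ n) * x)
    (hfrob₁ : θ (star x) * x = x * star x) (hxx : star x * x = c • 1) (n : N) :
    star x * θ (star x * θ n) * x = c • (star x * θ n) := by
  calc star x * θ (star x * θ n) * x = star x * (θ (star x) * x) * θ n := by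
        rw [map_mul, mul_assoc, mul_assoc, ← hx, mul_assoc, mul_assoc]
    _ = c • (star x * θ n) := by
        rw [hfrob₁, ← mul_assoc, hxx, smul_mul_assoc, one_mul, smul_mul_assoc]

end QSystem

section Faithful

variable {𝕜 N : Type*} [CommSemiring 𝕜] [NormedRing N] [StarRing N] [CStarRing N]
  [Algebra 𝕜 N] (θ : N →⋆ₐ[𝕜] N) {w x : N}

theorem eq_zero_of_star_mul_map_star_mul_self_mul_eq_zero (hw : ∀ n : N, w * n = θ n * w)
    (hwx : star w * x = 1) {a : N} (ha : star x * θ (star a * a) * x = 0) : a = 0 := by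
  have hax : θ a * x = 0 := by
    rw [← CStarRing.star_mul_self_eq_zero_iff, ← ha, star_mul, ← map_star, map_mul]
    noncomm_ring
  have hwa : star w * θ a = a * star w := by
    simpa [star_mul, map_star] using congr(star $(hw (star a))).symm
  calc a = a * (star w * x) := by rw [hwx, mul_one]
    _ = star w * (θ a * x) := by rw [← mul_assoc, ← hwa, mul_assoc]
    _ = 0 := by rw [hax, mul_zero]

end Faithful

theorem star_mul_map_eq_mul_star_of_standard {𝕜 N : Type*} [Field 𝕜] [StarRing 𝕜]
    [NormedRing N] [StarRing N] [CStarRing N] [Algebra 𝕜 N] [StarModule 𝕜 N]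
    (θ : N →⋆ₐ[𝕜] N) {w x m : N} {c : 𝕜} (hc : IsSelfAdjoint c) (hc0 : c ≠ 0)
    (hw : ∀ n : N, w * n = θ n * w)
    (hx : ∀ n : N, x * θ n = θ (θ n) * x) (hwx : star w * x = 1)
    (hfrob₁ : θ (star x) * x = x * star x) (hxx : star x * x = c • 1)
    (hmrep : θ m * m = x * m) (hmstd : star m * m = c • 1) :
    star x * θ m = m * star m := by
  set P := star x * θ m
  have hPP := star_mul_self_star_mul_map_eq_smul_star θ hx hfrob₁ hmrep hmstd
  have hE := isStarProjection_inv_smul_of_star_mul_self_eq_smul_star hc hc0 hPP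
  have hF : IsStarProjection (c⁻¹ • (m * star m)) := by
    refine isStarProjection_inv_smul_of_star_mul_self_eq_smul_star hc hc0 ?_
    rw [star_mul, star_star, mul_assoc, ← mul_assoc (star m), hmstd, smul_mul_assoc, one_mul,
      mul_smul_comm]
  have hEF : c⁻¹ • P * c⁻¹ • (m * star m) = c⁻¹ • (m * star m) := by
    rw [smul_mul_smul_comm, star_mul_map_mul_mul_star_eq_smul θ hxx hmrep, smul_smul,
      inv_mul_cancel_right₀ hc0]
  have hPsa := isSelfAdjoint_of_star_mul_self_eq_smul_star hc hc0 hPP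
  have hPsq : P * P = c • P := by rwa [hPsa.star_eq] at hPP
  have hδ : star x * θ (c⁻¹ • P - c⁻¹ • (m * star m)) * x = 0 := by
    have hδm : star x * θ (m * star m) * x = P * star P := by
      simp only [P, star_mul, star_star, map_mul, map_star, mul_assoc]
    rw [← smul_sub, map_smul, map_sub, mul_smul_comm, smul_mul_assoc, mul_sub, sub_mul,
      star_mul_map_star_mul_map_mul_eq_smul θ hx hfrob₁ hxx, hδm, hPsa.star_eq,
      hPsq, sub_self, smul_zero]
  have hdiff := hF.sub_of_mul_eq_right hE hEF
  have hEF0 := eq_zero_of_star_mul_map_star_mul_self_mul_eq_zero θ hw hwx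
    (by rwa [hdiff.isSelfAdjoint.star_eq, hdiff.isIdempotentElem.eq])
  rwa [← smul_sub, smul_eq_zero_iff_right (inv_ne_zero hc0), sub_eq_zero] at hEF0

theorem standard_module_frobenius_relation_general
    {N : Type*} [NormedRing N] [StarRing N] [CStarRing N]
    [NormedAlgebra ℂ N] [StarModule ℂ N]
    (θ : N →⋆ₐ[ℂ] N) (w x : N)
    (dA : ℝ) (hdA : 0 < dA)
    (hw : ∀ n : N, w * n = θ n * w)
    (hx : ∀ n : N, x * θ n = θ (θ n) * x)
    (hunit₁ : star w * x = 1)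
    (hfrob₁ : θ (star x) * x = x * star x)
    (hxx : star x * x = (dA : ℂ) • (1 : N))
    -- the standard module `(β, m)`
    (m : N)
    (hmunit : star w * m = 1)
    (hmrep : θ m * m = x * m)
    (hmstd : star m * m = (dA : ℂ) • (1 : N)) :
    star x * θ m = m * star m ∧                       -- `(x* × 1_β)∘(1_θ × m) = m∘m*`
    m * star m = θ (star m) * x ∧                     -- `m∘m* = (1_θ × m*)∘(x × 1_β)`
    star m = star (x * w) * θ m ∧                     -- `m* = (r* × 1_β)∘(1_θ × m)`
    (let E : N := ((dA⁻¹ : ℝ) : ℂ) • (star x * θ m)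
     star E = E ∧ E * E = E) := by                    -- `E` is a projection
  have hc : IsSelfAdjoint (dA : ℂ) := Complex.conj_ofReal dA
  have hc0 : (dA : ℂ) ≠ 0 := Complex.ofReal_ne_zero.mpr hdA.ne'
  have hfrob :=
    star_mul_map_eq_mul_star_of_standard θ hc hc0 hw hx hunit₁ hfrob₁ hxx hmrep hmstd
  refine ⟨hfrob, ?_, ?_, ?_⟩
  · simpa [star_mul, map_star] using congr(star $hfrob).symm
  · rw [star_mul, mul_assoc, hfrob, ← mul_assoc, hmunit, one_mul]
  · have hE := isStarProjection_inv_smul_of_star_mul_self_eq_smul_star hc hc0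
      (star_mul_self_star_mul_map_eq_smul_star θ hx hfrob₁ hmrep hmstd)
    rw [← Complex.ofReal_inv] at hE
    exact ⟨hE.isSelfAdjoint, hE.isIdempotentElem⟩

/-- **Lemma 3.25**.  For a standard module `(β, m)` of a Q-system `A = (θ, w, x)`,
the Frobenius-type relation
`(x* × 1_β)∘(1_θ × m) = m∘m* = (1_θ × m*)∘(x × 1_β)` holds.  Consequently
`m* = (r* × 1_β)∘(1_θ × m)` with `r = x∘w`, and
`E := d_A⁻¹·(x* × 1_β)∘(1_θ × m)` is a projection in `Hom(θβ, θβ)`. -/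
theorem standard_module_frobenius_relation
    {N : Type*} [NormedRing N] [StarRing N] [CStarRing N]
    [NormedAlgebra ℂ N] [StarModule ℂ N]
    (θ : N →⋆ₐ[ℂ] N) (w x : N)
    (dA : ℝ) (hdA : 0 < dA)
    (hw : ∀ n : N, w * n = θ n * w)
    (hx : ∀ n : N, x * θ n = θ (θ n) * x)
    (hunit₁ : star w * x = 1) (hunit₂ : θ (star w) * x = 1)
    (hassoc : x * x = θ x * x)
    (hfrob₁ : θ (star x) * x = x * star x) (hfrob₂ : x * star x = star x * θ x)
    (hww : star w * w = (dA : ℂ) • (1 : N))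
    (hxx : star x * x = (dA : ℂ) • (1 : N))
    -- the standard module `(β, m)`
    (β : N →⋆ₐ[ℂ] N) (m : N)
    (hm : ∀ n : N, m * β n = θ (β n) * m)
    (hmunit : star w * m = 1)
    (hmrep : θ m * m = x * m)
    (hmstd : star m * m = (dA : ℂ) • (1 : N)) :
    star x * θ m = m * star m ∧                       -- `(x* × 1_β)∘(1_θ × m) = m∘m*`
    m * star m = θ (star m) * x ∧                     -- `m∘m* = (1_θ × m*)∘(x × 1_β)`
    star m = star (x * w) * θ m ∧                     -- `m* = (r* × 1_β)∘(1_θ × m)`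
    (let E : N := ((dA⁻¹ : ℝ) : ℂ) • (star x * θ m)
     star E = E ∧ E * E = E) :=
  standard_module_frobenius_relation_general θ w x dA hdA hw hx hunit₁ hfrob₁ hxx m hmunit hmrep
    hmstd
end

section
/- Let A = (θ, w, x) be a Q-system in End₀(N) with extension ι : N → M, and P ∈ Hom(θ, θ) a projection satisfying (P × P)∘x = (P × 1_θ)∘x∘P = (1_θ × P)∘x∘P and P∘w = w. Then r*∘(P × P)∘r = Tr_θ(P), where r = x∘w; moreover L_P := ι(N P)v = {ι(nP)v : n ∈ N} is a von Neumann subalgebra of M containing ι(N) (an intermediate extension), closed under the *-operation: (ι(nP)v)* = ι(r*θ(n*)P)v. -/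
/-!
The relations `v ι(n) = ι(θ n) v`, `v² = ι(x) v` and `v* = ι(r*) v` (with `r = x w`) bring products and
adjoints of elements `ι(k) v` back to that form. Combining the two given `P`-insertions on `x` into
`P θ(P) x = θ(P) x P` lets the projection `P` be moved to the right end of the new coefficient, so
`ι(N P) v` is stable too; `P w = w` gives the trace identity and, via `1 = ι(w*) v`, that `ι(N) ⊆ ι(N P) v`.
-/

section Projection

variable {R N : Type*} [CommSemiring R] [Semiring N] [StarMul N] [Algebra R N]
  (θ : N →⋆ₐ[R] N) {w x P : N}

theorem proj_mul_map_proj_mul_r (hP₁ : P * θ P * x = P * x * P) (hP₂ : P * x * P = θ P * x * P)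
    (hPw : P * w = w) : P * θ P * (x * w) = θ P * (x * w) := by
  rw [← mul_assoc, hP₁, hP₂, mul_assoc _ P, hPw, mul_assoc]

theorem star_r_mul_proj (hP_sa : star P = P) (hP₂ : P * x * P = θ P * x * P) (hPw : P * w = w) :
    star (x * w) * P = star (x * w) * θ P := by
  have hPxw : P * (x * w) = θ P * (x * w) := calc
    P * (x * w) = P * x * P * w := by rw [mul_assoc _ P, hPw, mul_assoc]
    _ = θ P * x * P * w := by rw [hP₂]
    _ = θ P * (x * w) := by rw [mul_assoc _ P, hPw, mul_assoc]
  have hθP : star (θ P) = θ P := by rw [← map_star, hP_sa]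
  simpa only [star_mul, hP_sa, hθP, star_star] using congrArg star hPxw

theorem proj_mul_map_mul_x (hP_int : ∀ n : N, P * θ n = θ n * P)
    (hP₁ : P * θ P * x = P * x * P) (hP₂ : P * x * P = θ P * x * P) (b : N) :
    P * θ (b * P) * x = θ b * θ P * x * P := by
  rw [map_mul, ← mul_assoc, hP_int b, mul_assoc (θ b), mul_assoc (θ b), hP₁, hP₂, ← mul_assoc,
    ← mul_assoc]

end Projection

section Extension

variable {R N M : Type*} [CommSemiring R] [Semiring N] [StarMul N] [Algebra R N]
  [Semiring M] [StarMul M] [Algebra R M] (θ : N →⋆ₐ[R] N) {w x : N} {v : M}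

/-- `L_P = ι(N P) v`. -/
def intermediateSet (ι : N →⋆ₐ[R] M) (v : M) (P : N) : Set M :=
  {m | ∃ k : N, m = ι (k * P) * v}

theorem map_mul_v_mul_map_mul_v (ι : N →⋆ₐ[R] M) (hv : ∀ n : N, v * ι n = ι (θ n) * v)
    (hv2 : v * v = ι x * v) (a b : N) :
    ι a * v * (ι b * v) = ι (a * θ b * x) * v := by
  calc ι a * v * (ι b * v) = ι a * (v * ι b) * v := by simp only [mul_assoc]
    _ = ι a * ι (θ b) * (v * v) := by rw [hv]; simp only [mul_assoc]
    _ = ι (a * θ b * x) * v := by rw [hv2]; simp only [map_mul, mul_assoc]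

theorem star_map_mul_v (ι : N →⋆ₐ[R] M) (hv : ∀ n : N, v * ι n = ι (θ n) * v)
    (hvs : star v = ι (star (x * w)) * v) (a : N) :
    star (ι a * v) = ι (star (x * w) * θ (star a)) * v := by
  rw [star_mul, hvs, ← map_star, mul_assoc, hv, ← mul_assoc, map_mul]

theorem map_mem_intermediateSet (ι : N →⋆ₐ[R] M) {P : N} (hone : (1 : M) = ι (star w) * v)
    (hP_sa : star P = P) (hPw : P * w = w) (n : N) : ι n ∈ intermediateSet ι v P := by
  have hwP : star w * P = star w := by
    simpa only [star_mul, hP_sa] using congrArg star hPw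
  exact ⟨n * star w, by rw [mul_assoc, hwP, map_mul, mul_assoc, ← hone, mul_one]⟩

theorem mul_mem_intermediateSet (ι : N →⋆ₐ[R] M) {P : N} (hv : ∀ n : N, v * ι n = ι (θ n) * v)
    (hv2 : v * v = ι x * v) (hP_int : ∀ n : N, P * θ n = θ n * P)
    (hP₁ : P * θ P * x = P * x * P) (hP₂ : P * x * P = θ P * x * P) :
    ∀ a ∈ intermediateSet ι v P, ∀ b ∈ intermediateSet ι v P, a * b ∈ intermediateSet ι v P := by
  rintro _ ⟨k₁, rfl⟩ _ ⟨k₂, rfl⟩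
  refine ⟨k₁ * θ k₂ * θ P * x, ?_⟩
  rw [map_mul_v_mul_map_mul_v θ ι hv hv2, mul_assoc k₁ P, mul_assoc k₁,
    proj_mul_map_mul_x θ hP_int hP₁ hP₂]
  simp only [mul_assoc]

theorem star_map_mul_proj_mul_v (ι : N →⋆ₐ[R] M) {P : N} (hv : ∀ n : N, v * ι n = ι (θ n) * v)
    (hvs : star v = ι (star (x * w)) * v) (hP_int : ∀ n : N, P * θ n = θ n * P)
    (hP_sa : star P = P) (hP₂ : P * x * P = θ P * x * P) (hPw : P * w = w) (k : N) :
    star (ι (k * P) * v) = ι (star (x * w) * θ (star k) * P) * v := by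
  rw [star_map_mul_v θ ι hv hvs, star_mul k, hP_sa, map_mul θ, ← mul_assoc,
    ← star_r_mul_proj θ hP_sa hP₂ hPw, mul_assoc, hP_int, ← mul_assoc]

theorem star_mem_intermediateSet (ι : N →⋆ₐ[R] M) {P : N} (hv : ∀ n : N, v * ι n = ι (θ n) * v)
    (hvs : star v = ι (star (x * w)) * v) (hP_int : ∀ n : N, P * θ n = θ n * P)
    (hP_sa : star P = P) (hP₂ : P * x * P = θ P * x * P) (hPw : P * w = w) :
    ∀ a ∈ intermediateSet ι v P, star a ∈ intermediateSet ι v P := by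
  rintro _ ⟨k, rfl⟩
  exact ⟨_, star_map_mul_proj_mul_v θ ι hv hvs hP_int hP_sa hP₂ hPw k⟩

end Extension

theorem intermediate_qsystem_subalgebra_general
    {N : Type*} [NormedRing N] [StarRing N] [NormedAlgebra ℂ N]
    {M : Type*} [NormedRing M] [StarRing M] [NormedAlgebra ℂ M]
    (θ : N →⋆ₐ[ℂ] N) (w x : N)
    -- the extension `N ⊂ M = ι(N)v`
    (ι : N →⋆ₐ[ℂ] M) (v : M)
    (hv : ∀ n : N, v * ι n = ι (θ n) * v)
    (hv2 : v * v = ι x * v)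
    (hvs : star v = ι (star (x * w)) * v)
    (hone : (1 : M) = ι (star w) * v)
    -- the projection `P`: two of the three `P`-insertions on `x` imply the third
    (P : N)
    (hP_int : ∀ n : N, P * θ n = θ n * P)
    (hP_sa : star P = P)
    (hP₁ : P * θ P * x = P * x * P)        -- `(P × P)∘x = (P × 1_θ)∘x∘P`
    (hP₂ : P * x * P = θ P * x * P)        -- `(P × 1_θ)∘x∘P = (1_θ × P)∘x∘P`
    (hPw : P * w = w) :                     -- `P∘w = w`
    -- `r*∘(P × P)∘r = Tr_θ(P)`
    star (x * w) * (P * θ P) * (x * w) = star (x * w) * θ P * (x * w) ∧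
    -- `L_P = ι(NP)v` is an intermediate subalgebra, closed under `*`
    (let LP : Set M := {m : M | ∃ k : N, m = ι (k * P) * v}
     (∀ n : N, ι n ∈ LP) ∧
     (1 : M) ∈ LP ∧
     (∀ a ∈ LP, ∀ b ∈ LP, a * b ∈ LP) ∧
     (∀ a ∈ LP, star a ∈ LP) ∧
     (∀ k : N, star (ι (k * P) * v) = ι (star (x * w) * θ (star k) * P) * v)) := by
  refine ⟨by rw [mul_assoc, proj_mul_map_proj_mul_r θ hP₁ hP₂ hPw, ← mul_assoc], ?_⟩
  have hmem := map_mem_intermediateSet ι hone hP_sa hPw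
  exact ⟨hmem, map_one ι ▸ hmem 1, mul_mem_intermediateSet θ ι hv hv2 hP_int hP₁ hP₂,
    star_mem_intermediateSet θ ι hv hvs hP_int hP_sa hP₂ hPw,
    star_map_mul_proj_mul_v θ ι hv hvs hP_int hP_sa hP₂ hPw⟩

/-- **Proposition 4.9** (intermediate Q-systems).  Let `A = (θ, w, x)` be a
Q-system in `End₀(N)` with extension `ι : N → M = ι(N)v`, and
`P ∈ Hom(θ, θ)` a projection satisfying
`(P × P)∘x = (P × 1_θ)∘x∘P = (1_θ × P)∘x∘P` and `P∘w = w`.  Then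
`r*∘(P × P)∘r = Tr_θ(P)` (with `r = x∘w` and `Tr_θ(t) = r*∘(1_θ × t)∘r`), and
`L_P := ι(NP)v = {ι(nP)v : n ∈ N}` is a (von Neumann) subalgebra of `M`
containing `ι(N)` — an intermediate extension — closed under the *-operation:
`(ι(nP)v)* = ι(r*θ(n*)P)v`. -/
theorem intermediate_qsystem_subalgebra
    {N : Type*} [NormedRing N] [StarRing N] [CStarRing N]
    [NormedAlgebra ℂ N] [StarModule ℂ N]
    {M : Type*} [NormedRing M] [StarRing M] [CStarRing M]
    [NormedAlgebra ℂ M] [StarModule ℂ M]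
    (θ : N →⋆ₐ[ℂ] N) (w x : N) (dA : ℝ) (hdA : 0 < dA)
    (hw : ∀ n : N, w * n = θ n * w)
    (hx : ∀ n : N, x * θ n = θ (θ n) * x)
    (hunit₁ : star w * x = 1) (hunit₂ : θ (star w) * x = 1)
    (hassoc : x * x = θ x * x)
    (hfrob₁ : θ (star x) * x = x * star x) (hfrob₂ : x * star x = star x * θ x)
    (hww : star w * w = (dA : ℂ) • (1 : N))
    (hxx : star x * x = (dA : ℂ) • (1 : N))
    -- the extension `N ⊂ M = ι(N)v`
    (ι : N →⋆ₐ[ℂ] M) (v : M)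
    (hv : ∀ n : N, v * ι n = ι (θ n) * v)
    (hv2 : v * v = ι x * v)
    (hvs : star v = ι (star (x * w)) * v)
    (hone : (1 : M) = ι (star w) * v)
    -- the projection `P`: two of the three `P`-insertions on `x` imply the third
    (P : N)
    (hP_int : ∀ n : N, P * θ n = θ n * P)
    (hP_sa : star P = P) (hP_idem : P * P = P)
    (hP₁ : P * θ P * x = P * x * P)        -- `(P × P)∘x = (P × 1_θ)∘x∘P`
    (hP₂ : P * x * P = θ P * x * P)        -- `(P × 1_θ)∘x∘P = (1_θ × P)∘x∘P`
    (hPw : P * w = w) :                     -- `P∘w = w`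
    -- `r*∘(P × P)∘r = Tr_θ(P)`
    star (x * w) * (P * θ P) * (x * w) = star (x * w) * θ P * (x * w) ∧
    -- `L_P = ι(NP)v` is an intermediate subalgebra, closed under `*`
    (let LP : Set M := {m : M | ∃ k : N, m = ι (k * P) * v}
     (∀ n : N, ι n ∈ LP) ∧
     (1 : M) ∈ LP ∧
     (∀ a ∈ LP, ∀ b ∈ LP, a * b ∈ LP) ∧
     (∀ a ∈ LP, star a ∈ LP) ∧
     (∀ k : N, star (ι (k * P) * v) = ι (star (x * w) * θ (star k) * P) * v)) :=
  intermediate_qsystem_subalgebra_general θ w x ι v hv hv2 hvs hone P hP_int hP_sa hP₁ hP₂ hPw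
end
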